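/- arXiv:1806.11029 — 3 statements merged into one kernel-verified Lean document; each statement's English description precedes it below -/
import Mathlib

section
/- Let γ₁, γ₂ ∈ (1,2) and let μ be a finite signed measure on ℝ² for which there exist C > 0 and exponents α₁ ∈ (γ₁, 2], α₂ ∈ (γ₂, 2] such that ∫_{ℝ²} μ(B(x,u))² dx ≤ C · min(u₁, u₁^{α₁}) · min(u₂, u₂^{α₂}) for all u ∈ (0,∞)². Then ∫_{ℝ² × (0,∞)²} μ(B(x,u))² u₁^{−γ₁−1} u₂^{−γ₂−1} d(x,u) < ∞ (Lemma 3.2). -/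
open MeasureTheory Filter Set Topology

/-- The axis-parallel rectangle (box) in `ℝ²` with centre `x` and edge lengths `u`. -/
def box (x u : ℝ × ℝ) : Set (ℝ × ℝ) :=
  Icc (x.1 - u.1 / 2) (x.1 + u.1 / 2) ×ˢ Icc (x.2 - u.2 / 2) (x.2 + u.2 / 2)

/-- The open positive quadrant `(0,∞)²`. -/
def posQuadrant : Set (ℝ × ℝ) := Ioi 0 ×ˢ Ioi 0

/-!
By Tonelli we may integrate in `x` first. The hypothesis bounds the inner integral by
`C min(u₁, u₁^α₁) min(u₂, u₂^α₂)`, so the remaining integral over `(0,∞)²` splits into a product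
of one-dimensional integrals `∫₀^∞ min(t^(-γ), t^(α-γ-1)) dt`, finite because `γ > 1` and
`α - γ - 1 > -1`. The hypothesis speaks about a Bochner integral, so we must also check that
`x ↦ μ(B(x,u))²` is integrable: `|μ(B(x,u))| ≤ |μ|(B(x,u)) ≤ |μ|(ℝ²)` and
`∫ |μ|(B(x,u)) dx = |μ|(ℝ²) u₁ u₂`.
-/

lemma measurableSet_box (x u : ℝ × ℝ) : MeasurableSet (box x u) :=
  measurableSet_Icc.prod measurableSet_Icc

lemma mem_box_comm {x u y : ℝ × ℝ} : y ∈ box x u ↔ x ∈ box y u := by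
  simp only [box, mem_prod, mem_Icc]
  constructor <;> rintro ⟨⟨h₁, h₂⟩, h₃, h₄⟩ <;>
    exact ⟨⟨by linarith, by linarith⟩, by linarith, by linarith⟩

lemma volume_box (x u : ℝ × ℝ) :
    volume (box x u) = ENNReal.ofReal u.1 * ENNReal.ofReal u.2 := by
  rw [box, Measure.volume_eq_prod, Measure.prod_prod, Real.volume_Icc, Real.volume_Icc]
  ring_nf

lemma measurableSet_setOf_mem_box :
    MeasurableSet {q : ((ℝ × ℝ) × (ℝ × ℝ)) × (ℝ × ℝ) | q.2 ∈ box q.1.1 q.1.2} := by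
  simp only [box, mem_prod, mem_Icc, ofPred_and]
  refine ((measurableSet_le ?_ ?_).inter (measurableSet_le ?_ ?_)).inter
    ((measurableSet_le ?_ ?_).inter (measurableSet_le ?_ ?_)) <;> fun_prop

lemma measurable_measure_box (ν : Measure (ℝ × ℝ)) [SFinite ν] :
    Measurable fun p : (ℝ × ℝ) × (ℝ × ℝ) => ν (box p.1 p.2) :=
  measurable_measure_prodMk_left measurableSet_setOf_mem_box

lemma lintegral_measure_box (ν : Measure (ℝ × ℝ)) [SFinite ν] (u : ℝ × ℝ) :
    ∫⁻ x, ν (box x u) = ν univ * (ENNReal.ofReal u.1 * ENNReal.ofReal u.2) := by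
  have hS : MeasurableSet {q : (ℝ × ℝ) × (ℝ × ℝ) | q.2 ∈ box q.1 u} :=
    measurableSet_setOf_mem_box.preimage
      (f := fun q : (ℝ × ℝ) × (ℝ × ℝ) => ((q.1, u), q.2)) (by fun_prop)
  calc ∫⁻ x, ν (box x u) = (volume.prod ν) {q | q.2 ∈ box q.1 u} := (Measure.prod_apply hS).symm
    _ = ∫⁻ y, volume (box y u) ∂ν := by
        rw [Measure.prod_apply_symm hS]
        simp only [preimage_ofPred_eq, mem_box_comm, ofPred_mem_eq]
    _ = _ := by simp_rw [volume_box]; rw [lintegral_const, mul_comm]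

lemma measurable_signedMeasure_box (μ : SignedMeasure (ℝ × ℝ)) :
    Measurable fun p : (ℝ × ℝ) × (ℝ × ℝ) => μ (box p.1 p.2) := by
  simp_rw [μ.apply_eq_posPart_real_sub_negPart_real (measurableSet_box _ _), measureReal_def]
  exact (measurable_measure_box _).ennreal_toReal.sub (measurable_measure_box _).ennreal_toReal

lemma integrable_sq_signedMeasure_box (μ : SignedMeasure (ℝ × ℝ)) (u : ℝ × ℝ) :
    Integrable fun x => μ (box x u) ^ 2 := by
  set ν := μ.totalVariation
  have hν : Integrable fun x => ν.real (box x u) :=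
    integrable_toReal_of_lintegral_ne_top
      ((measurable_measure_box ν).comp (measurable_id.prodMk measurable_const)).aemeasurable
      (by rw [lintegral_measure_box]; finiteness)
  refine (hν.const_mul (ν.real univ)).mono'
    (((measurable_signedMeasure_box μ).comp (measurable_id.prodMk measurable_const)).pow_const
      2).aestronglyMeasurable (ae_of_all _ fun x => ?_)
  have h := μ.norm_le_totalVariation (box x u)
  rw [norm_pow, sq]
  exact mul_le_mul (h.trans (measureReal_mono (subset_univ _))) h (norm_nonneg _)
    measureReal_nonneg

lemma lintegral_ofReal_mul_le_of_integral_le {α : Type*} [MeasurableSpace α] {μ : Measure α}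
    {f : α → ℝ} (hf : Integrable f μ) (hf₀ : 0 ≤ f) {B w : ℝ} (hB : ∫ x, f x ∂μ ≤ B)
    (hw : 0 ≤ w) :
    ∫⁻ x, ENNReal.ofReal (f x * w) ∂μ ≤ ENNReal.ofReal (B * w) := by
  simp_rw [ENNReal.ofReal_mul' hw]
  rw [lintegral_mul_const' _ _ ENNReal.ofReal_ne_top,
    ← ofReal_integral_eq_lintegral_ofReal hf (ae_of_all _ hf₀)]
  exact mul_le_mul_left (ENNReal.ofReal_le_ofReal hB) _

lemma integrableOn_Ioi_min_rpow {a b : ℝ} (ha : a < -1) (hb : -1 < b) :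
    IntegrableOn (fun t : ℝ => min (t ^ a) (t ^ b)) (Ioi 0) := by
  have hmeas : AEStronglyMeasurable fun t : ℝ => min (t ^ a) (t ^ b) := by fun_prop
  have hnorm : ∀ t ∈ Ioi (0 : ℝ), ‖min (t ^ a) (t ^ b)‖ = min (t ^ a) (t ^ b) := fun t ht =>
    Real.norm_of_nonneg (le_min (Real.rpow_nonneg ht.le _) (Real.rpow_nonneg ht.le _))
  rw [← Ioc_union_Ioi_eq_Ioi zero_le_one]
  refine IntegrableOn.union ?_ ?_
  · refine ((intervalIntegrable_iff_integrableOn_Ioc_of_le zero_le_one).1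
      (intervalIntegral.intervalIntegrable_rpow' hb)).mono' hmeas.restrict
      (ae_restrict_of_forall_mem measurableSet_Ioc fun t ht => ?_)
    exact (hnorm t ht.1).trans_le (min_le_right _ _)
  · refine (integrableOn_Ioi_rpow_of_lt ha one_pos).mono' hmeas.restrict
      (ae_restrict_of_forall_mem measurableSet_Ioi fun t ht => ?_)
    exact (hnorm t (mem_Ioi.2 (zero_lt_one.trans ht))).trans_le (min_le_left _ _)

lemma min_self_rpow_mul_rpow {t : ℝ} (ht : 0 < t) (α γ : ℝ) :
    min t (t ^ α) * t ^ (-(γ + 1)) = min (t ^ (-γ)) (t ^ (α - γ - 1)) := by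
  nth_rw 1 [← Real.rpow_one t]
  rw [min_mul_of_nonneg _ _ (Real.rpow_nonneg ht.le _), ← Real.rpow_add ht, ← Real.rpow_add ht]
  congr 2 <;> ring

lemma lintegral_min_self_rpow_mul_rpow_lt_top {α γ : ℝ} (hγ : 1 < γ) (hγα : γ < α) :
    ∫⁻ t in Ioi 0, ENNReal.ofReal (min t (t ^ α) * t ^ (-(γ + 1))) < ⊤ := by
  have h := integrableOn_Ioi_min_rpow (a := -γ) (b := α - γ - 1) (by linarith) (by linarith)
  exact ((integrableOn_congr_fun (fun t ht => min_self_rpow_mul_rpow ht α γ)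
    measurableSet_Ioi).2 h).lintegral_lt_top

lemma lintegral_sq_signedMeasure_box_mul_rpow_le {μ : SignedMeasure (ℝ × ℝ)}
    {C α₁ α₂ γ₁ γ₂ : ℝ} {u : ℝ × ℝ} (hu : u ∈ posQuadrant)
    (hbound : ∫ x, μ (box x u) ^ 2 ≤ C * min u.1 (u.1 ^ α₁) * min u.2 (u.2 ^ α₂)) :
    ∫⁻ x, ENNReal.ofReal (μ (box x u) ^ 2 * u.1 ^ (-(γ₁ + 1)) * u.2 ^ (-(γ₂ + 1)))
      ≤ ENNReal.ofReal C * (ENNReal.ofReal (min u.1 (u.1 ^ α₁) * u.1 ^ (-(γ₁ + 1)))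
        * ENNReal.ofReal (min u.2 (u.2 ^ α₂) * u.2 ^ (-(γ₂ + 1)))) := by
  obtain ⟨hu₁, hu₂⟩ := hu
  have hm₁ : 0 ≤ min u.1 (u.1 ^ α₁) := le_min hu₁.le (Real.rpow_nonneg hu₁.le _)
  have hm₂ : 0 ≤ min u.2 (u.2 ^ α₂) := le_min hu₂.le (Real.rpow_nonneg hu₂.le _)
  have hw₁ : 0 ≤ u.1 ^ (-(γ₁ + 1)) := Real.rpow_nonneg hu₁.le _
  have hw₂ : 0 ≤ u.2 ^ (-(γ₂ + 1)) := Real.rpow_nonneg hu₂.le _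
  simp_rw [mul_assoc (μ (box _ u) ^ 2)]
  refine (lintegral_ofReal_mul_le_of_integral_le (integrable_sq_signedMeasure_box μ u)
    (fun _ => sq_nonneg _) hbound (mul_nonneg hw₁ hw₂)).trans_eq ?_
  rw [← ENNReal.ofReal_mul (mul_nonneg hm₁ hw₁),
    ← ENNReal.ofReal_mul' (mul_nonneg (mul_nonneg hm₁ hw₁) (mul_nonneg hm₂ hw₂))]
  ring_nf

theorem integral_sq_weighted_finite_general
    (γ₁ γ₂ : ℝ) (hγ₁ : γ₁ ∈ Ioo (1 : ℝ) 2) (hγ₂ : γ₂ ∈ Ioo (1 : ℝ) 2)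
    (μ : MeasureTheory.SignedMeasure (ℝ × ℝ))
    (C : ℝ) (α₁ α₂ : ℝ) (hα₁ : α₁ ∈ Ioc γ₁ 2) (hα₂ : α₂ ∈ Ioc γ₂ 2)
    (hbound : ∀ u ∈ posQuadrant,
      (∫ x : ℝ × ℝ, (μ (box x u)) ^ 2) ≤ C * min u.1 (u.1 ^ α₁) * min u.2 (u.2 ^ α₂)) :
    (∫⁻ p : (ℝ × ℝ) × (ℝ × ℝ) in univ ×ˢ posQuadrant,
      ENNReal.ofReal ((μ (box p.1 p.2)) ^ 2 * p.2.1 ^ (-(γ₁ + 1)) * p.2.2 ^ (-(γ₂ + 1)))) < ⊤ := by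
  have hmeas : Measurable fun p : (ℝ × ℝ) × (ℝ × ℝ) =>
      ENNReal.ofReal (μ (box p.1 p.2) ^ 2 * p.2.1 ^ (-(γ₁ + 1)) * p.2.2 ^ (-(γ₂ + 1))) :=
    ((((measurable_signedMeasure_box μ).pow_const 2).mul
      (measurable_snd.fst.pow_const _)).mul (measurable_snd.snd.pow_const _)).ennreal_ofReal
  calc _ = ∫⁻ u in posQuadrant, ∫⁻ x,
        ENNReal.ofReal (μ (box x u) ^ 2 * u.1 ^ (-(γ₁ + 1)) * u.2 ^ (-(γ₂ + 1))) := by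
        rw [Measure.volume_eq_prod, ← Measure.prod_restrict, Measure.restrict_univ,
          lintegral_prod_symm _ hmeas.aemeasurable]
    _ ≤ ∫⁻ u in posQuadrant, ENNReal.ofReal C *
        (ENNReal.ofReal (min u.1 (u.1 ^ α₁) * u.1 ^ (-(γ₁ + 1)))
          * ENNReal.ofReal (min u.2 (u.2 ^ α₂) * u.2 ^ (-(γ₂ + 1)))) :=
        setLIntegral_mono' (measurableSet_Ioi.prod measurableSet_Ioi) fun u hu =>
          lintegral_sq_signedMeasure_box_mul_rpow_le hu (hbound u hu)
    _ = ENNReal.ofReal C *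
        ((∫⁻ t in Ioi 0, ENNReal.ofReal (min t (t ^ α₁) * t ^ (-(γ₁ + 1))))
          * ∫⁻ t in Ioi 0, ENNReal.ofReal (min t (t ^ α₂) * t ^ (-(γ₂ + 1)))) := by
        rw [lintegral_const_mul' _ _ ENNReal.ofReal_ne_top, posQuadrant, Measure.volume_eq_prod,
          ← Measure.prod_restrict,
          lintegral_prod_mul (f := fun t => ENNReal.ofReal (min t (t ^ α₁) * t ^ (-(γ₁ + 1))))
            (g := fun t => ENNReal.ofReal (min t (t ^ α₂) * t ^ (-(γ₂ + 1)))) (by fun_prop)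
            (by fun_prop)]
    _ < ⊤ := ENNReal.mul_lt_top ENNReal.ofReal_lt_top (ENNReal.mul_lt_top
        (lintegral_min_self_rpow_mul_rpow_lt_top hγ₁.1 hα₁.1)
        (lintegral_min_self_rpow_mul_rpow_lt_top hγ₂.1 hα₂.1))

/-- Lemma 3.2: for `μ ∈ 𝓜^{γ₁,γ₂}`, the integral
`∫ μ(B(x,u))² u₁^{-γ₁-1} u₂^{-γ₂-1} d(x,u)` is finite. -/
theorem integral_sq_weighted_finite
    (γ₁ γ₂ : ℝ) (hγ₁ : γ₁ ∈ Ioo (1 : ℝ) 2) (hγ₂ : γ₂ ∈ Ioo (1 : ℝ) 2)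
    (μ : MeasureTheory.SignedMeasure (ℝ × ℝ))
    (C : ℝ) (hC : 0 < C) (α₁ α₂ : ℝ) (hα₁ : α₁ ∈ Ioc γ₁ 2) (hα₂ : α₂ ∈ Ioc γ₂ 2)
    (hbound : ∀ u ∈ posQuadrant,
      (∫ x : ℝ × ℝ, (μ (box x u)) ^ 2) ≤ C * min u.1 (u.1 ^ α₁) * min u.2 (u.2 ^ α₂)) :
    (∫⁻ p : (ℝ × ℝ) × (ℝ × ℝ) in univ ×ˢ posQuadrant,
      ENNReal.ofReal ((μ (box p.1 p.2)) ^ 2 * p.2.1 ^ (-(γ₁ + 1)) * p.2.2 ^ (-(γ₂ + 1)))) < ⊤ :=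
  integral_sq_weighted_finite_general γ₁ γ₂ hγ₁ hγ₂ μ C α₁ α₂ hα₁ hα₂ hbound
end

section
/- Let f : ℝ² → ℝ be measurable and suppose |f(x)| ≤ C_μ exp(−c_μ(|x₁| + |x₂|)) for some constants C_μ, c_μ > 0 and all x ∈ ℝ². Define the maximal function m*(x) = sup_{u ∈ (0,∞)²} (u₁ u₂)^{−1} ∫_{B(x,u)} |f(y)| dy. Then for all x ∈ ℝ², m*(x) ≤ g(x) where g(x) = C_μ · min(1, 2/(c_μ |x₁|)) · min(1, 2/(c_μ |x₂|)), and g belongs to L^β(ℝ²) for every β > 1 (Lemma 3.5(ii)). -/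
/-!
The bound `|f(y)| ≤ C e^{-c|y₁|} e^{-c|y₂|}` factorises, so the average over a box splits into
two averages of `e^{-c|t|}` over intervals of length `u` centred at `x`. Such an average is at
most `1`, and also at most `2 / (c|x|)`: if `u ≤ |x|` the interval stays at distance `|x| / 2`
from the origin, where `e^{-c|t|} ≤ e^{-c|x|/2} ≤ 2 / (c|x|)`, and if `u > |x|` the whole
integral `2 / c` divided by `u` is already small enough. Each factor `min 1 (2 / (c|x|))` is
`O((1 + |x|)⁻¹)`, which lies in `L^β(ℝ)` for `β > 1`, and `g` is a tensor product of such
functions.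
-/

open MeasureTheory Filter Set Topology

open scoped ENNReal

theorem MeasureTheory.MemLp.mul_prod {α β 𝕜 : Type*} [MeasurableSpace α] [MeasurableSpace β]
    [NormedDivisionRing 𝕜] {μ : Measure α} {ν : Measure β} [SFinite ν] {p : ℝ≥0∞}
    {f : α → 𝕜} {g : β → 𝕜} (hf : MemLp f p μ) (hg : MemLp g p ν) (hp0 : p ≠ 0)
    (hp_top : p ≠ ∞) : MemLp (fun z : α × β => f z.1 * g z.2) p (μ.prod ν) := by
  have hfg : AEStronglyMeasurable (fun z : α × β => f z.1 * g z.2) (μ.prod ν) :=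
    hf.1.comp_fst.mul hg.1.comp_snd
  rw [← integrable_norm_rpow_iff hfg hp0 hp_top]
  have hfp := (integrable_norm_rpow_iff hf.1 hp0 hp_top).2 hf
  have hgp := (integrable_norm_rpow_iff hg.1 hp0 hp_top).2 hg
  simpa only [norm_mul, Real.mul_rpow (norm_nonneg _) (norm_nonneg _)] using hfp.mul_prod hgp

theorem memLp_one_add_norm_inv {E : Type*} [NormedAddCommGroup E] [NormedSpace ℝ E]
    [FiniteDimensional ℝ E] [MeasurableSpace E] [BorelSpace E] {μ : Measure E}
    [μ.IsAddHaarMeasure] {p : ℝ≥0∞} (hp : (Module.finrank ℝ E : ℝ) < p.toReal) :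
    MemLp (fun x : E => (1 + ‖x‖)⁻¹) p μ := by
  obtain ⟨hp0, hp_top⟩ := ENNReal.toReal_pos_iff.1 ((Nat.cast_nonneg _).trans_lt hp)
  rw [← integrable_norm_rpow_iff (by fun_prop) hp0.ne' hp_top.ne]
  refine (integrable_one_add_norm hp).congr (Eventually.of_forall fun x => ?_)
  have : 0 < 1 + ‖x‖ := by positivity
  simp only [norm_inv, Real.norm_of_nonneg this.le, Real.inv_rpow this.le, Real.rpow_neg this.le]

lemma Real.exp_neg_le_inv {s : ℝ} (hs : 0 < s) : Real.exp (-s) ≤ s⁻¹ := by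
  rw [Real.exp_neg]
  exact inv_anti₀ hs (by linarith [Real.add_one_le_exp s])

-- The factor `min(1, 2/(c|x|))` of `g`; the case `x = 0` is split off because `2 / 0 = 0`.
noncomputable def decayFactor (c x : ℝ) : ℝ := if x = 0 then 1 else min 1 (2 / (c * |x|))

section DecayFactor

variable {c : ℝ}

lemma decayFactor_nonneg (hc : 0 ≤ c) (x : ℝ) : 0 ≤ decayFactor c x := by
  unfold decayFactor
  split_ifs
  · exact zero_le_one
  · exact le_min zero_le_one (by positivity)

lemma decayFactor_le_one (c x : ℝ) : decayFactor c x ≤ 1 := by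
  unfold decayFactor
  split_ifs
  · exact le_rfl
  · exact min_le_left _ _

lemma decayFactor_mul_abs_le (hc : 0 < c) (x : ℝ) : decayFactor c x * |x| ≤ 2 / c := by
  unfold decayFactor
  split_ifs with hx
  · simp only [hx, abs_zero, mul_zero]; positivity
  · calc min 1 (2 / (c * |x|)) * |x| ≤ 2 / (c * |x|) * |x| := by gcongr; exact min_le_right _ _
      _ = 2 / c := by field_simp

lemma decayFactor_le_mul_one_add_abs_inv (hc : 0 < c) (x : ℝ) :
    decayFactor c x ≤ (1 + 2 / c) * (1 + |x|)⁻¹ := by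
  rw [← div_eq_mul_inv, le_div_iff₀ (by positivity), mul_one_add]
  linarith [decayFactor_le_one c x, decayFactor_mul_abs_le hc x]

lemma measurable_decayFactor (c : ℝ) : Measurable (decayFactor c) :=
  Measurable.ite (measurableSet_singleton 0) measurable_const (by fun_prop)

lemma memLp_decayFactor (hc : 0 < c) {p : ℝ≥0∞} (hp : 1 < p.toReal) :
    MemLp (decayFactor c) p volume := by
  refine ((memLp_one_add_norm_inv (by simpa using hp)).const_mul (1 + 2 / c)).of_le
    (measurable_decayFactor c).aestronglyMeasurable (ae_of_all _ fun x => ?_)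
  rw [Real.norm_of_nonneg (decayFactor_nonneg hc.le x), Real.norm_of_nonneg (by positivity),
    Real.norm_eq_abs]
  exact decayFactor_le_mul_one_add_abs_inv hc x

end DecayFactor

section ExpNegMulAbs

variable {c : ℝ}

lemma integrable_exp_neg_mul_abs (hc : 0 < c) :
    Integrable fun t : ℝ => Real.exp (-c * |t|) := by
  have h_Ici : IntegrableOn (fun t : ℝ => Real.exp (-c * |t|)) (Ici 0) := by
    have h := exp_neg_integrableOn_Ioi 0 hc
    rw [← integrableOn_Ici_iff_integrableOn_Ioi] at h
    refine h.congr_fun (fun t ht => ?_) measurableSet_Ici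
    rw [abs_of_nonneg ht]
  have h_Iic : IntegrableOn (fun t : ℝ => Real.exp (-c * |t|)) (Iic 0) := by
    have h_neg : MeasurableEmbedding fun t : ℝ => -t := (Homeomorph.neg ℝ).measurableEmbedding
    rw [← Measure.map_neg_eq_self (volume : Measure ℝ), h_neg.integrableOn_map_iff]
    simpa only [Function.comp_def, abs_neg, neg_preimage, neg_Iic, neg_zero] using h_Ici
  simpa only [Iic_union_Ici, integrableOn_univ] using h_Iic.union h_Ici

lemma integral_exp_neg_mul_abs (hc : 0 < c) : ∫ t : ℝ, Real.exp (-c * |t|) = 2 / c := by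
  have h := integral_comp_mul_left_Ioi (fun y => Real.exp (-y)) 0 hc
  simp only [mul_zero, integral_exp_neg_Ioi_zero, smul_eq_mul, mul_one] at h
  rw [integral_comp_abs (f := fun t => Real.exp (-c * t))]
  simp only [neg_mul]
  rw [h, div_eq_mul_inv]

lemma setIntegral_Icc_exp_neg_mul_abs_le (hc : 0 < c) (x : ℝ) {u : ℝ} (hu : 0 < u) :
    ∫ t in Icc (x - u / 2) (x + u / 2), Real.exp (-c * |t|) ≤ u * decayFactor c x := by
  have h_const : ∀ C, (∀ t ∈ Icc (x - u / 2) (x + u / 2), Real.exp (-c * |t|) ≤ C) →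
      ∫ t in Icc (x - u / 2) (x + u / 2), Real.exp (-c * |t|) ≤ u * C := fun C hC =>
    calc ∫ t in Icc (x - u / 2) (x + u / 2), Real.exp (-c * |t|)
        ≤ ‖∫ t in Icc (x - u / 2) (x + u / 2), Real.exp (-c * |t|)‖ := Real.le_norm_self _
      _ ≤ C * volume.real (Icc (x - u / 2) (x + u / 2)) :=
        norm_setIntegral_le_of_norm_le_const measure_Icc_lt_top fun t ht => by
          rw [Real.norm_of_nonneg (Real.exp_pos _).le]; exact hC t ht
      _ = u * C := by rw [Real.volume_real_Icc_of_le (by linarith)]; ring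
  have h_one := h_const 1 fun t _ => Real.exp_le_one_iff.2 (by nlinarith [abs_nonneg t])
  unfold decayFactor
  split_ifs with hx
  · exact h_one
  rw [mul_min_of_nonneg _ _ hu.le]
  refine le_min h_one ?_
  have hx' : 0 < |x| := abs_pos.2 hx
  rcases le_or_gt u |x| with hux | hux
  · refine h_const _ fun t ht => ?_
    have hxt : |x - t| ≤ u / 2 := abs_sub_le_iff.2 ⟨by linarith [ht.1], by linarith [ht.2]⟩
    have ht' : |x| / 2 ≤ |t| := by linarith [abs_sub_abs_le_abs_sub x t]
    calc Real.exp (-c * |t|) ≤ Real.exp (-(c * |x| / 2)) := Real.exp_le_exp.2 (by nlinarith)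
      _ ≤ (c * |x| / 2)⁻¹ := Real.exp_neg_le_inv (by positivity)
      _ = 2 / (c * |x|) := inv_div _ _
  · calc ∫ t in Icc (x - u / 2) (x + u / 2), Real.exp (-c * |t|)
        ≤ ∫ t, Real.exp (-c * |t|) := setIntegral_le_integral (integrable_exp_neg_mul_abs hc)
          (ae_of_all _ fun t => (Real.exp_pos _).le)
      _ = 2 / c := integral_exp_neg_mul_abs hc
      _ ≤ u * (2 / (c * |x|)) := by
        rw [mul_div_assoc', div_le_div_iff₀ hc (by positivity)]
        nlinarith

end ExpNegMulAbs

lemma setIntegral_box_exp_neg_mul_le {c : ℝ} (hc : 0 < c) (x : ℝ × ℝ) {u : ℝ × ℝ}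
    (hu : u ∈ posQuadrant) :
    ∫ y in box x u, Real.exp (-c * (|y.1| + |y.2|)) ≤
      u.1 * u.2 * (decayFactor c x.1 * decayFactor c x.2) := by
  obtain ⟨hu₁, hu₂⟩ : 0 < u.1 ∧ 0 < u.2 := hu
  have h_split : ∀ y : ℝ × ℝ,
      Real.exp (-c * (|y.1| + |y.2|)) = Real.exp (-c * |y.1|) * Real.exp (-c * |y.2|) := by
    intro y; rw [← Real.exp_add]; ring_nf
  simp_rw [h_split]
  rw [box, Measure.volume_eq_prod,
    setIntegral_prod_mul (fun t => Real.exp (-c * |t|)) (fun t => Real.exp (-c * |t|))]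
  calc _ ≤ (u.1 * decayFactor c x.1) * (u.2 * decayFactor c x.2) :=
        mul_le_mul (setIntegral_Icc_exp_neg_mul_abs_le hc x.1 hu₁)
          (setIntegral_Icc_exp_neg_mul_abs_le hc x.2 hu₂)
          (integral_nonneg fun _ => (Real.exp_pos _).le)
          (mul_nonneg hu₁.le (decayFactor_nonneg hc.le _))
    _ = u.1 * u.2 * (decayFactor c x.1 * decayFactor c x.2) := by ring

theorem maximal_function_bound_general
    (f : ℝ × ℝ → ℝ)
    (Cμ cμ : ℝ) (hcμ : 0 < cμ)
    (hdecay : ∀ x : ℝ × ℝ, |f x| ≤ Cμ * Real.exp (-cμ * (|x.1| + |x.2|))) :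
    (∀ x : ℝ × ℝ, ∀ u ∈ posQuadrant,
      (u.1 * u.2)⁻¹ * ∫ y in box x u, |f y| ≤
        Cμ * (if x.1 = 0 then 1 else min 1 (2 / (cμ * |x.1|))) *
          (if x.2 = 0 then 1 else min 1 (2 / (cμ * |x.2|)))) ∧
    (∀ β : ℝ, 1 < β →
      MemLp (fun x : ℝ × ℝ =>
          Cμ * (if x.1 = 0 then 1 else min 1 (2 / (cμ * |x.1|))) *
            (if x.2 = 0 then 1 else min 1 (2 / (cμ * |x.2|))))
        (ENNReal.ofReal β) volume) := by
  have hCμ : 0 ≤ Cμ :=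
    nonneg_of_mul_nonneg_left ((abs_nonneg _).trans (hdecay 0)) (Real.exp_pos _)
  refine ⟨fun x u hu => ?_, fun β hβ => ?_⟩
  · have h_dom : IntegrableOn (fun y : ℝ × ℝ => Cμ * Real.exp (-cμ * (|y.1| + |y.2|)))
        (box x u) :=
      ContinuousOn.integrableOn_compact (isCompact_Icc.prod isCompact_Icc) (by fun_prop)
    rw [inv_mul_le_iff₀ (mul_pos hu.1 hu.2)]
    calc ∫ y in box x u, |f y|
        ≤ ∫ y in box x u, Cμ * Real.exp (-cμ * (|y.1| + |y.2|)) :=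
          integral_mono_of_nonneg (ae_of_all _ fun y => abs_nonneg _) h_dom (ae_of_all _ hdecay)
      _ = Cμ * ∫ y in box x u, Real.exp (-cμ * (|y.1| + |y.2|)) := integral_const_mul _ _
      _ ≤ Cμ * (u.1 * u.2 * (decayFactor cμ x.1 * decayFactor cμ x.2)) :=
          mul_le_mul_of_nonneg_left (setIntegral_box_exp_neg_mul_le hcμ x hu) hCμ
      _ = u.1 * u.2 * (Cμ * decayFactor cμ x.1 * decayFactor cμ x.2) := by ring
  · have hβ' : 1 < (ENNReal.ofReal β).toReal := by rwa [ENNReal.toReal_ofReal (by linarith)]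
    have h_memLp := ((memLp_decayFactor hcμ hβ').mul_prod (memLp_decayFactor hcμ hβ')
      (ENNReal.ofReal_pos.2 (by linarith)).ne' ENNReal.ofReal_ne_top).const_mul Cμ
    rw [← Measure.volume_eq_prod] at h_memLp
    simpa only [decayFactor, mul_assoc] using h_memLp

/-- Lemma 3.5(ii): the maximal function of an exponentially decaying density is dominated
by an explicit function `g` lying in `L^β(ℝ²)` for every `β > 1`.  (At points where a
coordinate vanishes the corresponding factor of `g` is interpreted as `1`.) -/
theorem maximal_function_bound
    (f : ℝ × ℝ → ℝ) (hfm : Measurable f)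
    (Cμ cμ : ℝ) (hCμ : 0 < Cμ) (hcμ : 0 < cμ)
    (hdecay : ∀ x : ℝ × ℝ, |f x| ≤ Cμ * Real.exp (-cμ * (|x.1| + |x.2|))) :
    (∀ x : ℝ × ℝ, ∀ u ∈ posQuadrant,
      (u.1 * u.2)⁻¹ * ∫ y in box x u, |f y| ≤
        Cμ * (if x.1 = 0 then 1 else min 1 (2 / (cμ * |x.1|))) *
          (if x.2 = 0 then 1 else min 1 (2 / (cμ * |x.2|)))) ∧
    (∀ β : ℝ, 1 < β →
      MemLp (fun x : ℝ × ℝ =>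
          Cμ * (if x.1 = 0 then 1 else min 1 (2 / (cμ * |x.1|))) *
            (if x.2 = 0 then 1 else min 1 (2 / (cμ * |x.2|))))
        (ENNReal.ofReal β) volume) :=
  maximal_function_bound_general f Cμ cμ hcμ hdecay
end

section
/- Let c > 0 and define g₁(x, u) = ∫_{x−u/2}^{x+u/2} exp(−c|y|) dy for x ∈ ℝ and u > 0. Then: (a) for every q > 0 there exists C > 0 such that for all u ∈ (0,1], ∫_ℝ g₁(x,u)^q dx ≤ C u^q; and (b) for every p > 0 there exists C > 0 such that for all u ≥ 1, ∫_ℝ g₁(x,u)^p dx ≤ C u. -/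
open MeasureTheory Set

/-!
Every point `y` of the window `[x - u/2, x + u/2]` has `|y| ≥ |x| - u/2`. Splitting
`e^{-c|y|} = e^{-c|y|/2} e^{-c|y|/2}` therefore gives
`g₁(x, u) ≤ K e^{-(c/2) max(|x| - u/2, 0)}` with `K = ∫_window e^{-c|y|/2}`, and `K` is at
most both the length `u` of the window and the total mass `4/c`. The `r`-th power of this
plateau profile integrates to `u + 4/(c r)`, so `∫ g₁(x, u)^r dx ≤ K^r (u + 4/(c r))`; part (a)
takes `K ≤ u` and part (b) takes `K ≤ 4/c`.
-/

theorem integrable_comp_abs_of_integrableOn_Ioi {E : Type*} [NormedAddCommGroup E] {f : ℝ → E}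
    (hf : IntegrableOn f (Ioi 0)) : Integrable (fun x => f |x|) := by
  have h_Ioi : IntegrableOn (fun x => f |x|) (Ioi 0) :=
    hf.congr_fun (fun x hx => by rw [abs_of_pos (mem_Ioi.1 hx)]) measurableSet_Ioi
  have h_Iic : IntegrableOn (fun x => f |x|) (Iic 0) := by
    rw [← Measure.map_neg_eq_self (volume : Measure ℝ),
      measurableEmbedding_neg.integrableOn_map_iff]
    simp_rw [Function.comp_def, abs_neg, neg_preimage, neg_Iic, neg_zero]
    exact (integrableOn_Ici_iff_integrableOn_Ioi).mpr h_Ioi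
  rw [← integrableOn_univ, ← Iic_union_Ioi (a := (0 : ℝ))]
  exact h_Iic.union h_Ioi

noncomputable def plateauExp (a ρ t : ℝ) : ℝ := Real.exp (-a * max (t - ρ) 0)

namespace plateauExp

variable {a ρ : ℝ}

theorem pos (t : ℝ) : 0 < plateauExp a ρ t := Real.exp_pos _

theorem continuous : Continuous (plateauExp a ρ) := by
  unfold plateauExp; fun_prop

theorem rpow (r t : ℝ) : plateauExp a ρ t ^ r = plateauExp (a * r) ρ t := by
  rw [plateauExp, plateauExp, ← Real.exp_mul]; ring_nf

theorem le_exp_mul (ha : 0 ≤ a) (t : ℝ) :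
    plateauExp a ρ t ≤ Real.exp (a * ρ) * Real.exp (-a * t) := by
  rw [plateauExp, ← Real.exp_add, Real.exp_le_exp]
  nlinarith [le_max_left (t - ρ) 0]

theorem integrableOn_Ioi (ha : 0 < a) (s : ℝ) : IntegrableOn (plateauExp a ρ) (Ioi s) :=
  ((exp_neg_integrableOn_Ioi s ha).const_mul _).mono' continuous.aestronglyMeasurable.restrict
    (ae_of_all _ fun t => by
      rw [Real.norm_of_nonneg (pos t).le]; exact le_exp_mul ha.le t)

theorem setIntegral_Ioi_zero (ha : 0 < a) (hρ : 0 ≤ ρ) :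
    ∫ t in Ioi 0, plateauExp a ρ t = ρ + 1 / a := by
  have h_flat : ∫ t in Ioc 0 ρ, plateauExp a ρ t = ρ := by
    rw [setIntegral_congr_fun measurableSet_Ioc (g := fun _ => 1)
      (fun t ht => by simp [plateauExp, ht.2])]
    simp [hρ]
  have h_tail : ∫ t in Ioi ρ, plateauExp a ρ t = 1 / a := by
    rw [setIntegral_congr_fun measurableSet_Ioi
      (g := fun t => Real.exp (a * ρ) * Real.exp (-a * t)) (fun t ht => by
        simp only [plateauExp, max_eq_left (sub_nonneg.2 (mem_Ioi.1 ht).le), ← Real.exp_add]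
        ring_nf),
      integral_const_mul, integral_exp_mul_Ioi (neg_lt_zero.2 ha), neg_div_neg_eq, mul_div_assoc',
      ← Real.exp_add]
    simp
  rw [← Ioc_union_Ioi_eq_Ioi hρ, setIntegral_union (Ioc_disjoint_Ioi le_rfl) measurableSet_Ioi
    ((integrableOn_Ioi ha 0).mono_set Ioc_subset_Ioi_self) (integrableOn_Ioi ha ρ), h_flat, h_tail]

theorem integrable_comp_abs (ha : 0 < a) : Integrable (fun x => plateauExp a ρ |x|) :=
  integrable_comp_abs_of_integrableOn_Ioi (integrableOn_Ioi ha 0)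

theorem integral_comp_abs (ha : 0 < a) (hρ : 0 ≤ ρ) :
    ∫ x, plateauExp a ρ |x| = 2 * (ρ + 1 / a) := by
  rw [_root_.integral_comp_abs, setIntegral_Ioi_zero ha hρ]

end plateauExp

theorem max_abs_sub_le_abs_of_mem_Icc {x y ρ : ℝ} (hy : y ∈ Icc (x - ρ) (x + ρ)) :
    max (|x| - ρ) 0 ≤ |y| := by
  have h_dist : |x - y| ≤ ρ := abs_sub_le_iff.2 ⟨by linarith [hy.1], by linarith [hy.2]⟩
  exact max_le (by linarith [abs_sub_abs_le_abs_sub x y]) (abs_nonneg y)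

theorem continuous_exp_neg_mul_abs (c : ℝ) : Continuous fun y : ℝ => Real.exp (-c * |y|) := by
  fun_prop

/-- The paper's `g₁(x, u)`. -/
noncomputable def windowIntegral (c u x : ℝ) : ℝ :=
  ∫ y in Icc (x - u / 2) (x + u / 2), Real.exp (-c * |y|)

namespace windowIntegral

variable {c u : ℝ}

theorem nonneg (x : ℝ) : 0 ≤ windowIntegral c u x :=
  setIntegral_nonneg measurableSet_Icc fun _ _ => (Real.exp_pos _).le

theorem le_length (hc : 0 ≤ c) (hu : 0 ≤ u) (x : ℝ) : windowIntegral c u x ≤ u := by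
  calc windowIntegral c u x ≤ ∫ _ in Icc (x - u / 2) (x + u / 2), (1 : ℝ) :=
        setIntegral_mono_on (continuous_exp_neg_mul_abs c).integrableOn_Icc
          (integrableOn_const measure_Icc_lt_top.ne) measurableSet_Icc
          fun y _ => Real.exp_le_one_iff.2 (by nlinarith [abs_nonneg y])
    _ = u := by simp [hu]

theorem le_two_div (hc : 0 < c) (x : ℝ) : windowIntegral c u x ≤ 2 / c := by
  have h_eq : (fun y : ℝ => Real.exp (-c * |y|)) = fun y => plateauExp c 0 |y| := by
    simp [plateauExp]
  calc windowIntegral c u x ≤ ∫ y, Real.exp (-c * |y|) := by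
        rw [windowIntegral, h_eq]
        exact setIntegral_le_integral (plateauExp.integrable_comp_abs hc)
          (ae_of_all _ fun y => (plateauExp.pos _).le)
    _ = 2 / c := by rw [h_eq, plateauExp.integral_comp_abs hc le_rfl]; ring

theorem le_mul_plateauExp (hc : 0 ≤ c) (x : ℝ) :
    windowIntegral c u x ≤ plateauExp (c / 2) (u / 2) |x| * windowIntegral (c / 2) u x := by
  rw [windowIntegral, windowIntegral, ← integral_const_mul]
  refine setIntegral_mono_on (continuous_exp_neg_mul_abs c).integrableOn_Icc
    ((continuous_exp_neg_mul_abs _).integrableOn_Icc.const_mul _) measurableSet_Icc fun y hy => ?_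
  have h_far := max_abs_sub_le_abs_of_mem_Icc hy
  rw [plateauExp, ← Real.exp_add, Real.exp_le_exp]
  nlinarith

theorem integral_rpow_le (hc : 0 < c) (hu : 0 ≤ u) {r K : ℝ} (hr : 0 < r)
    (hK : ∀ x, windowIntegral (c / 2) u x ≤ K) :
    ∫ x, windowIntegral c u x ^ r ≤ K ^ r * (u + 4 / (c * r)) := by
  have hK0 : 0 ≤ K := (nonneg 0).trans (hK 0)
  have hcr : 0 < c / 2 * r := by positivity
  have h_pointwise :
      ∀ x, windowIntegral c u x ^ r ≤ K ^ r * plateauExp (c / 2 * r) (u / 2) |x| := by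
    intro x
    calc windowIntegral c u x ^ r ≤ (K * plateauExp (c / 2) (u / 2) |x|) ^ r := by
          gcongr
          · exact nonneg x
          · calc windowIntegral c u x
                ≤ plateauExp (c / 2) (u / 2) |x| * windowIntegral (c / 2) u x :=
                  le_mul_plateauExp hc.le x
              _ ≤ K * plateauExp (c / 2) (u / 2) |x| := by
                  rw [mul_comm]; gcongr; exacts [(plateauExp.pos _).le, hK x]
      _ = K ^ r * plateauExp (c / 2 * r) (u / 2) |x| := by
          rw [Real.mul_rpow hK0 (plateauExp.pos _).le, plateauExp.rpow]
  have h_dom : Integrable fun x => K ^ r * plateauExp (c / 2 * r) (u / 2) |x| :=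
    (plateauExp.integrable_comp_abs hcr).const_mul _
  calc ∫ x, windowIntegral c u x ^ r
      ≤ ∫ x, K ^ r * plateauExp (c / 2 * r) (u / 2) |x| :=
        integral_mono_of_nonneg (ae_of_all _ fun x => Real.rpow_nonneg (nonneg x) r) h_dom
          (ae_of_all _ h_pointwise)
    _ = K ^ r * (u + 4 / (c * r)) := by
        rw [integral_const_mul, plateauExp.integral_comp_abs hcr (by linarith)]
        field_simp
        ring

end windowIntegral

/-- Bounds for `∫_ℝ g₁(x,u)^r dx` where `g₁(x,u) = ∫_{x-u/2}^{x+u/2} e^{-c|y|} dy`: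
(a) for `q > 0` and `u ≤ 1` the integral is `≤ C u^q`;
(b) for `p > 0` and `u ≥ 1` the integral is `≤ C u`. -/
theorem window_power_integral_bounds (c : ℝ) (hc : 0 < c) :
    (∀ q > (0 : ℝ), ∃ C > (0 : ℝ), ∀ u ∈ Ioc (0 : ℝ) 1,
      (∫ x : ℝ, (∫ y in Icc (x - u / 2) (x + u / 2), Real.exp (-c * |y|)) ^ q) ≤
        C * u ^ q) ∧
    (∀ p > (0 : ℝ), ∃ C > (0 : ℝ), ∀ u : ℝ, 1 ≤ u →
      (∫ x : ℝ, (∫ y in Icc (x - u / 2) (x + u / 2), Real.exp (-c * |y|)) ^ p) ≤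
        C * u) := by
  refine ⟨fun q hq => ⟨1 + 4 / (c * q), by positivity, fun u ⟨hu0, hu1⟩ => ?_⟩,
    fun p hp => ⟨(4 / c) ^ p * (1 + 4 / (c * p)), by positivity, fun u hu1 => ?_⟩⟩
  · calc ∫ x, windowIntegral c u x ^ q ≤ u ^ q * (u + 4 / (c * q)) :=
          windowIntegral.integral_rpow_le hc hu0.le hq
            (windowIntegral.le_length (by positivity) hu0.le)
      _ ≤ (1 + 4 / (c * q)) * u ^ q := by rw [mul_comm]; gcongr
  · have h_mass : ∀ x, windowIntegral (c / 2) u x ≤ 4 / c := fun x =>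
      (windowIntegral.le_two_div (half_pos hc) x).trans_eq (by field_simp; norm_num)
    have hk : 0 ≤ 4 / (c * p) := by positivity
    calc ∫ x, windowIntegral c u x ^ p ≤ (4 / c) ^ p * (u + 4 / (c * p)) :=
          windowIntegral.integral_rpow_le hc (by linarith) hp h_mass
      _ ≤ (4 / c) ^ p * (1 + 4 / (c * p)) * u := by
          rw [mul_assoc]; gcongr; nlinarith
end
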